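/- arXiv:2504.11941 — 2 statements merged into one kernel-verified Lean document; each statement's English description precedes it below -/
import Mathlib

section
/- Let G be the complete graph on 2k vertices. Then aim(G,k) = k, while the Erey–Hibi k-admissible matching number aim*(G,k) equals 1; in particular the difference aim(G,k) − aim*(G,k) = k − 1 can be arbitrarily large. -/
open scoped Classical

variable {V : Type*} [DecidableEq V]

/-- A matching of a hypergraph with edge set `E`: a set of pairwise disjoint edges. -/
def IsMatching (E M : Finset (Finset V)) : Prop :=
  M ⊆ E ∧ ∀ e ∈ M, ∀ f ∈ M, e ≠ f → Disjoint e f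

/-- The set of vertices covered by a set of edges. -/
def verts (M : Finset (Finset V)) : Finset V := M.sup id

/-- Edge set of the induced sub-hypergraph on the vertex set `W`. -/
def inducedSub (E : Finset (Finset V)) (W : Finset V) : Finset (Finset V) :=
  E.filter (fun e => e ⊆ W)

/-- The matching number. -/
noncomputable def matchNum (E : Finset (Finset V)) : ℕ :=
  sSup {n : ℕ | ∃ M : Finset (Finset V), IsMatching E M ∧ M.card = n}

/-- `P` is a partition of the finite set `M` into nonempty pairwise disjoint parts. -/
def IsPartitionOf (M : Finset (Finset V)) (P : Finset (Finset (Finset V))) : Prop :=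
  (∀ p ∈ P, p ≠ ∅) ∧ (∀ p ∈ P, ∀ q ∈ P, p ≠ q → Disjoint p q) ∧ P.sup id = M

/-- A partition witnessing that `M` is a generalized `k`-admissible matching. -/
def GenAdmPartition (E M : Finset (Finset V)) (k : ℕ)
    (P : Finset (Finset (Finset V))) : Prop :=
  IsPartitionOf M P ∧
  (∀ e ∈ inducedSub E (verts M), ∃ p ∈ P, e ⊆ verts p) ∧
  k ≤ M.card ∧ M.card ≤ P.card + k - 1 ∧
  ∀ p ∈ P, ∀ M' : Finset (Finset V),
    IsMatching (inducedSub E (verts p)) M' → M'.card = p.card → verts M' = verts p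

/-- Generalized `k`-admissible matching. -/
def IsGenAdmissible (E M : Finset (Finset V)) (k : ℕ) : Prop :=
  IsMatching E M ∧ ∃ P, GenAdmPartition E M k P

/-- A partition witnessing that `M` is a `k`-admissible matching (d-uniform setting). -/
def AdmPartition (E M : Finset (Finset V)) (k : ℕ)
    (P : Finset (Finset (Finset V))) : Prop :=
  IsPartitionOf M P ∧
  (∀ e ∈ inducedSub E (verts M), ∃ p ∈ P, e ⊆ verts p) ∧
  M.card ≤ P.card + k - 1

/-- `k`-admissible matching. -/
def IsAdmissible (E M : Finset (Finset V)) (k : ℕ) : Prop :=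
  IsMatching E M ∧ ∃ P, AdmPartition E M k P

/-- The `k`-admissible matching number `aim(H, k)`. -/
noncomputable def aim (E : Finset (Finset V)) (k : ℕ) : ℕ :=
  sSup {n : ℕ | ∃ M : Finset (Finset V), IsAdmissible E M k ∧ M.card = n}

/-- The edges of a simple graph, as a set of `2`-element vertex subsets. -/
noncomputable def graphEdges [Fintype V] (G : SimpleGraph V) : Finset (Finset V) :=
  Finset.univ.filter (fun s : Finset V =>
    s.card = 2 ∧ ∀ a ∈ s, ∀ b ∈ s, a ≠ b → G.Adj a b)

/-- The `k`-admissible matching number of a graph. -/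
noncomputable def aimG [Fintype V] (G : SimpleGraph V) (k : ℕ) : ℕ :=
  aim (graphEdges G) k

/-- The Erey–Hibi `k`-admissible matchings: additionally each part must induce a forest. -/
def IsAdmissibleStar [Fintype V] (G : SimpleGraph V) (M : Finset (Finset V)) (k : ℕ) : Prop :=
  IsMatching (graphEdges G) M ∧ ∃ P : Finset (Finset (Finset V)),
    AdmPartition (graphEdges G) M k P ∧
    ∀ p ∈ P, (SimpleGraph.induce (↑(verts p) : Set V) G).IsAcyclic

/-- The Erey–Hibi `k`-admissible matching number `aim*(G,k)`. -/
noncomputable def aimStar [Fintype V] (G : SimpleGraph V) (k : ℕ) : ℕ :=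
  sSup {n : ℕ | ∃ M : Finset (Finset V), IsAdmissibleStar G M k ∧ M.card = n}

/-!
A perfect matching of `K_{2k}`, taken as a single part, is `k`-admissible, and no matching has
more than `k` edges, so `aim = k`. In a complete graph the vertices of two matching edges span a
`K_4`, which is not a forest, so every part of an Erey–Hibi partition is a single edge; an edge
joining two different matching edges then lies in no part, so the matching has only one edge.
-/

namespace SimpleGraph

variable {α : Type*}

lemma induce_top_eq_top (s : Set α) : (⊤ : SimpleGraph α).induce s = ⊤ := by
  ext
  simp [Subtype.ext_iff]

lemma not_isAcyclic_top [Fintype α] (h : 3 ≤ Fintype.card α) :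
    ¬ (⊤ : SimpleGraph α).IsAcyclic := fun hA => by
  obtain ⟨s, -, hs⟩ := Finset.exists_subset_card_eq (s := Finset.univ)
    (h.trans_eq Finset.card_univ.symm)
  exact hA.cliqueFree le_rfl s ⟨IsClique.top _, hs⟩

lemma isAcyclic_induce_top_iff (s : Finset α) :
    ((⊤ : SimpleGraph α).induce (s : Set α)).IsAcyclic ↔ s.card ≤ 2 := by
  rw [induce_top_eq_top]
  constructor
  · intro hA
    by_contra! hs
    exact not_isAcyclic_top (by simp only [Finset.coe_sort_coe, Fintype.card_coe]; omega) hA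
  · intro hs
    exact IsAcyclic.of_card_le_two (by simpa using hs)

end SimpleGraph

section Hypergraph

variable {α : Type*} {E M : Finset (Finset α)}

lemma IsMatching.subset (hM : IsMatching E M) {N : Finset (Finset α)} (hN : N ⊆ M) :
    IsMatching E N :=
  ⟨hN.trans hM.1, fun e he f hf => hM.2 e (hN he) f (hN hf)⟩

lemma IsMatching.eq_of_mem_of_mem (hM : IsMatching E M) {e f : Finset α} (he : e ∈ M)
    (hf : f ∈ M) {a : α} (hae : a ∈ e) (haf : a ∈ f) : e = f := by
  by_contra hef
  exact Finset.disjoint_left.1 (hM.2 e he f hf hef) hae haf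

lemma isMatching_singleton {e : Finset α} (he : e ∈ E) : IsMatching E {e} :=
  ⟨Finset.singleton_subset_iff.2 he, by simp +contextual⟩

variable [DecidableEq α]

lemma mem_verts {a : α} : a ∈ verts M ↔ ∃ e ∈ M, a ∈ e := by
  simp [verts]

lemma IsPartitionOf.subset {P : Finset (Finset (Finset α))} (hP : IsPartitionOf M P)
    {p : Finset (Finset α)} (hp : p ∈ P) : p ⊆ M :=
  hP.2.2 ▸ Finset.le_sup (f := id) hp

lemma IsMatching.card_verts {d : ℕ} (hE : ∀ e ∈ E, e.card = d) (hM : IsMatching E M) :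
    (verts M).card = d * M.card := by
  rw [verts, Finset.sup_eq_biUnion, Finset.card_biUnion (t := id) hM.2,
    Finset.sum_congr rfl fun e he => (hE e (hM.1 he) : (id e).card = d), Finset.sum_const,
    smul_eq_mul, mul_comm]

lemma admPartition_singleton {k : ℕ} (hM : M ≠ ∅) (hk : M.card ≤ k) :
    AdmPartition E M k {M} := by
  refine ⟨⟨by simpa using hM, by simp +contextual, Finset.sup_singleton⟩, fun e he => ?_,
    by simpa using hk⟩
  exact ⟨M, Finset.mem_singleton_self M, (Finset.mem_filter.1 he).2⟩

lemma isAdmissible_of_card_le {k : ℕ} (hM : IsMatching E M) (hne : M ≠ ∅)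
    (hk : M.card ≤ k) : IsAdmissible E M k :=
  ⟨hM, {M}, admPartition_singleton hne hk⟩

end Hypergraph

section Graph

variable {α : Type*} [DecidableEq α] [Fintype α]

lemma card_of_mem_graphEdges {G : SimpleGraph α} {s : Finset α} (hs : s ∈ graphEdges G) :
    s.card = 2 :=
  (Finset.mem_filter.1 hs).2.1

lemma mem_graphEdges_top {s : Finset α} :
    s ∈ graphEdges (⊤ : SimpleGraph α) ↔ s.card = 2 := by
  simp [graphEdges]

lemma IsMatching.two_mul_card_le {G : SimpleGraph α} {M : Finset (Finset α)}
    (hM : IsMatching (graphEdges G) M) : 2 * M.card ≤ Fintype.card α := by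
  rw [← hM.card_verts fun _ => card_of_mem_graphEdges]
  exact Finset.card_le_univ _

lemma exists_isMatching_top_card {n : ℕ} (hα : Fintype.card α = 2 * n) :
    ∃ M, IsMatching (graphEdges (⊤ : SimpleGraph α)) M ∧ M.card = n := by
  let f : Fin 2 × Fin n ≃ α := finProdFinEquiv.trans (Fintype.equivFinOfCardEq hα).symm
  let pair (i : Fin n) : Finset α := {f (0, i), f (1, i)}
  have pair_injective : Function.Injective pair := fun i j hij => by
    have : f (0, i) ∈ pair j := hij ▸ Finset.mem_insert_self _ _
    simpa [pair, f.apply_eq_iff_eq] using this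
  refine ⟨Finset.univ.image pair, ⟨fun e he => ?_, fun e he e' he' hne => ?_⟩, ?_⟩
  · obtain ⟨i, -, rfl⟩ := Finset.mem_image.1 he
    exact mem_graphEdges_top.2 (Finset.card_pair (by simp [f.apply_eq_iff_eq]))
  · obtain ⟨i, -, rfl⟩ := Finset.mem_image.1 he
    obtain ⟨j, -, rfl⟩ := Finset.mem_image.1 he'
    have hij : i ≠ j := fun h => hne (h ▸ rfl)
    simp [pair, Finset.disjoint_left, f.apply_eq_iff_eq, hij]
  · rw [Finset.card_image_of_injective _ pair_injective, Finset.card_univ, Fintype.card_fin]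

lemma aimG_top {k : ℕ} (hα : Fintype.card α = 2 * k) (hk : 1 ≤ k) :
    aimG (⊤ : SimpleGraph α) k = k := by
  obtain ⟨M, hM, hMk⟩ := exists_isMatching_top_card hα
  have hne : M ≠ ∅ := by
    rintro rfl
    simp only [Finset.card_empty] at hMk
    omega
  refine IsGreatest.csSup_eq ⟨⟨M, isAdmissible_of_card_le hM hne hMk.le, hMk⟩, ?_⟩
  rintro n ⟨N, hN, rfl⟩
  have := hN.1.two_mul_card_le
  omega

lemma isAdmissibleStar_singleton {G : SimpleGraph α} {e : Finset α} {k : ℕ}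
    (he : e ∈ graphEdges G) (hk : 1 ≤ k) : IsAdmissibleStar G {e} k := by
  refine ⟨isMatching_singleton he, {{e}}, admPartition_singleton (by simp) (by simpa using hk),
    ?_⟩
  simp only [Finset.mem_singleton, forall_eq]
  exact SimpleGraph.IsAcyclic.of_card_le_two (by simp [verts, card_of_mem_graphEdges he])

lemma IsAdmissibleStar.card_le_one_of_top {M : Finset (Finset α)} {k : ℕ}
    (hM : IsAdmissibleStar (⊤ : SimpleGraph α) M k) : M.card ≤ 1 := by
  obtain ⟨hM, P, ⟨hP, hcover, -⟩, hforest⟩ := hM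
  have hpart : ∀ p ∈ P, p.card ≤ 1 := fun p hp => by
    have := (SimpleGraph.isAcyclic_induce_top_iff _).1 (hforest p hp)
    rw [(hM.subset (hP.subset hp)).card_verts fun _ => card_of_mem_graphEdges] at this
    omega
  refine Finset.card_le_one.2 fun e he f hf => ?_
  obtain ⟨a, hae⟩ := Finset.card_pos.1 (by rw [card_of_mem_graphEdges (hM.1 he)]; norm_num)
  obtain ⟨c, hcf⟩ := Finset.card_pos.1 (by rw [card_of_mem_graphEdges (hM.1 hf)]; norm_num)
  by_contra hef
  have hac : a ≠ c := fun h => hef (hM.eq_of_mem_of_mem he hf hae (h ▸ hcf))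
  have hac_mem : {a, c} ∈ inducedSub (graphEdges ⊤) (verts M) :=
    Finset.mem_filter.2 ⟨mem_graphEdges_top.2 (Finset.card_pair hac),
      Finset.insert_subset_iff.2 ⟨mem_verts.2 ⟨e, he, hae⟩,
        Finset.singleton_subset_iff.2 (mem_verts.2 ⟨f, hf, hcf⟩)⟩⟩
  obtain ⟨p, hp, hacp⟩ := hcover _ hac_mem
  obtain ⟨e', he', hae'⟩ := mem_verts.1 (hacp (Finset.mem_insert_self a {c}))
  obtain ⟨f', hf', hcf'⟩ := mem_verts.1 (hacp (by simp : c ∈ ({a, c} : Finset α)))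
  obtain rfl : e' = f' := Finset.card_le_one.1 (hpart p hp) e' he' f' hf'
  exact hef ((hM.eq_of_mem_of_mem he (hP.subset hp he') hae hae').trans
    (hM.eq_of_mem_of_mem (hP.subset hp he') hf hcf' hcf))

lemma aimStar_top {k : ℕ} (hα : 2 ≤ Fintype.card α) (hk : 1 ≤ k) :
    aimStar (⊤ : SimpleGraph α) k = 1 := by
  obtain ⟨e, -, he⟩ := Finset.exists_subset_card_eq (s := Finset.univ)
    (hα.trans_eq Finset.card_univ.symm)
  refine IsGreatest.csSup_eq ⟨⟨{e}, isAdmissibleStar_singleton (mem_graphEdges_top.2 he) hk,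
    Finset.card_singleton e⟩, ?_⟩
  rintro n ⟨M, hM, rfl⟩
  exact hM.card_le_one_of_top

end Graph

/-- For the complete graph `G` on `2k` vertices, `aim(G,k) = k` while the Erey–Hibi
number `aim*(G,k) = 1`; in particular their difference is `k - 1`. -/
theorem aim_complete_graph (k : ℕ) (hk : 1 ≤ k) :
    aimG (⊤ : SimpleGraph (Fin (2 * k))) k = k ∧
    aimStar (⊤ : SimpleGraph (Fin (2 * k))) k = 1 ∧
    aimG (⊤ : SimpleGraph (Fin (2 * k))) k - aimStar (⊤ : SimpleGraph (Fin (2 * k))) k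
      = k - 1 := by
  have haim : aimG (⊤ : SimpleGraph (Fin (2 * k))) k = k := aimG_top (Fintype.card_fin _) hk
  have haimStar : aimStar (⊤ : SimpleGraph (Fin (2 * k))) k = 1 :=
    aimStar_top (by rw [Fintype.card_fin]; omega) hk
  exact ⟨haim, haimStar, by rw [haim, haimStar]⟩
end

section
/- Let G be a block graph, B a block of G, and u_1, u_2 ∈ V(B) two distinct free vertices of G. Let H = G \ V(B). Then for each 1 ≤ k ≤ ν(G), aim(H,k) ≤ aim(G,k) − 1. -/
/-!
Take a `k`-admissible matching `M` of `H = G ∖ V(B)` of maximal size `aim(H, k)`, together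
with its partition, and read it in `G`. Adding the edge `u₁u₂` as a new singleton part keeps
it `k`-admissible: `u₁` and `u₂` are free, so all their neighbours lie in the block `B`, which
`V(M)` avoids; hence an edge of `G` inside `V(M) ∪ {u₁, u₂}` is either `u₁u₂` or an edge of
`H` inside `V(M)`, already covered by a part. Both the matching and the number of parts grow
by one.
-/

open scoped Classical

variable {V : Type*} [DecidableEq V]

/-- `G` has an induced cycle on `n` vertices. -/
def HasInducedCycle {W : Type*} (G : SimpleGraph W) (n : ℕ) : Prop :=
  ∃ f : Fin n → W, Function.Injective f ∧
    ∀ i j : Fin n, G.Adj (f i) (f j) ↔ ((j : ℕ) = ((i : ℕ) + 1) % n ∨ (i : ℕ) = ((j : ℕ) + 1) % n)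

/-- A graph is chordal if it has no induced cycle of length at least `4`. -/
def Chordal {W : Type*} (G : SimpleGraph W) : Prop :=
  ∀ n : ℕ, 4 ≤ n → ¬ HasInducedCycle G n

/-- A block of `G`: a maximal clique. -/
def IsBlock (G : SimpleGraph V) (B : Finset V) : Prop :=
  G.IsClique (↑B : Set V) ∧ ∀ C : Finset V, G.IsClique (↑C : Set V) → B ⊆ C → B = C

/-- A block graph: a chordal graph in which any two distinct maximal cliques intersect
in at most one vertex. -/
def IsBlockGraph (G : SimpleGraph V) : Prop :=
  Chordal G ∧ ∀ B C : Finset V, IsBlock G B → IsBlock G C → B ≠ C → (B ∩ C).card ≤ 1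

/-- A free vertex: its open neighborhood induces a complete graph. -/
def FreeVertex (G : SimpleGraph V) (x : V) : Prop :=
  G.IsClique (G.neighborSet x)

section Hypergraph

variable {W : Type*} [DecidableEq W]

lemma subset_verts {M : Finset (Finset V)} {e : Finset V} (he : e ∈ M) : e ⊆ verts M :=
  Finset.le_sup (f := id) he

lemma verts_insert (e : Finset V) (M : Finset (Finset V)) :
    verts (insert e M) = e ∪ verts M :=
  Finset.sup_insert

lemma sup_id_map_mapEmbedding (φ : W ↪ V) (S : Finset (Finset W)) :
    (S.map (Finset.mapEmbedding φ).toEmbedding).sup id = (S.sup id).map φ := by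
  ext a
  simp only [Finset.mem_sup, Finset.mem_map, id, RelEmbedding.coe_toEmbedding,
    Finset.mapEmbedding_apply]
  constructor
  · rintro ⟨_, ⟨s, hs, rfl⟩, hs'⟩
    obtain ⟨x, hx, rfl⟩ := Finset.mem_map.mp hs'
    exact ⟨x, ⟨s, hs, hx⟩, rfl⟩
  · rintro ⟨x, ⟨s, hs, hx⟩, rfl⟩
    exact ⟨_, ⟨s, hs, rfl⟩, Finset.mem_map_of_mem φ hx⟩

lemma empty_isAdmissible {E : Finset (Finset V)} (hE : ∅ ∉ E) (k : ℕ) :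
    IsAdmissible E ∅ k := by
  refine ⟨⟨Finset.empty_subset _, by simp⟩, ∅, ⟨by simp, by simp, by simp⟩, ?_, by simp⟩
  intro e he
  have : e = ∅ := Finset.subset_empty.mp (Finset.mem_filter.mp he).2
  exact absurd (this ▸ (Finset.mem_filter.mp he).1) hE

lemma bddAbove_card_isAdmissible (E : Finset (Finset V)) (k : ℕ) :
    BddAbove {n | ∃ M, IsAdmissible E M k ∧ M.card = n} := by
  refine ⟨E.card, ?_⟩
  rintro n ⟨M, hM, rfl⟩
  exact Finset.card_le_card hM.1.1

lemma IsAdmissible.card_le_aim {E M : Finset (Finset V)} {k : ℕ} (hM : IsAdmissible E M k) :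
    M.card ≤ aim E k :=
  le_csSup (bddAbove_card_isAdmissible E k) ⟨M, hM, rfl⟩

lemma exists_isAdmissible_card_eq_aim {E : Finset (Finset V)} (hE : ∅ ∉ E) (k : ℕ) :
    ∃ M, IsAdmissible E M k ∧ M.card = aim E k :=
  Nat.sSup_mem (s := {n | ∃ M, IsAdmissible E M k ∧ M.card = n})
    ⟨0, ∅, empty_isAdmissible hE k, rfl⟩ (bddAbove_card_isAdmissible E k)

lemma forall_disjoint_map_mapEmbedding {α β : Type*} {S : Finset (Finset α)} (φ : α ↪ β)
    (hS : ∀ a ∈ S, ∀ b ∈ S, a ≠ b → Disjoint a b) :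
    ∀ a ∈ S.map (Finset.mapEmbedding φ).toEmbedding,
      ∀ b ∈ S.map (Finset.mapEmbedding φ).toEmbedding, a ≠ b → Disjoint a b := by
  simp only [Finset.mem_map, RelEmbedding.coe_toEmbedding, Finset.mapEmbedding_apply]
  rintro _ ⟨a, ha, rfl⟩ _ ⟨b, hb, rfl⟩ hab
  exact (Finset.disjoint_map φ).mpr (hS a ha b hb (ne_of_apply_ne _ hab))

lemma IsAdmissible.map {E : Finset (Finset W)} {E' : Finset (Finset V)} {M : Finset (Finset W)}
    {k : ℕ} (φ : W ↪ V) (hE : ∀ e, e.map φ ∈ E' ↔ e ∈ E) (hM : IsAdmissible E M k) :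
    IsAdmissible E' (M.map (Finset.mapEmbedding φ).toEmbedding) k := by
  obtain ⟨⟨hME, hMdisj⟩, P, ⟨hPne, hPdisj, hPsup⟩, hcover, hcard⟩ := hM
  set ψ := (Finset.mapEmbedding φ).toEmbedding
  have verts_map (N : Finset (Finset W)) : verts (N.map ψ) = (verts N).map φ :=
    sup_id_map_mapEmbedding φ N
  refine ⟨⟨?_, forall_disjoint_map_mapEmbedding φ hMdisj⟩,
    P.map (Finset.mapEmbedding ψ).toEmbedding,
    ⟨?_, forall_disjoint_map_mapEmbedding ψ hPdisj, ?_⟩, ?_, ?_⟩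
  · intro _ he
    obtain ⟨e, heM, rfl⟩ := Finset.mem_map.mp he
    exact (hE e).mpr (hME heM)
  · intro _ hp
    obtain ⟨p, hpP, rfl⟩ := Finset.mem_map.mp hp
    simpa [ψ] using hPne p hpP
  · rw [sup_id_map_mapEmbedding, hPsup]
  · intro f hf
    obtain ⟨hfE, hfM⟩ := Finset.mem_filter.mp hf
    rw [verts_map] at hfM
    obtain ⟨g, hgM, rfl⟩ := Finset.subset_map_iff.mp hfM
    obtain ⟨p, hp, hgp⟩ := hcover g (Finset.mem_filter.mpr ⟨(hE g).mp hfE, hgM⟩)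
    refine ⟨p.map ψ, Finset.mem_map_of_mem _ hp, ?_⟩
    rw [verts_map]
    exact Finset.map_subset_map.mpr hgp
  · simpa only [Finset.card_map] using hcard

lemma notMem_of_disjoint_verts {M : Finset (Finset V)} {e : Finset V} (he : e.Nonempty)
    (hdisj : Disjoint e (verts M)) : e ∉ M := fun h =>
  he.ne_empty (Finset.disjoint_self_iff_empty e |>.mp (hdisj.mono_right (subset_verts h)))

lemma IsAdmissible.insert_edge {E M : Finset (Finset V)} {k : ℕ} {e : Finset V}
    (hM : IsAdmissible E M k) (hk : 1 ≤ k) (he : e ∈ E) (he_ne : e.Nonempty)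
    (hdisj : Disjoint e (verts M)) (hsplit : ∀ f ∈ E, f ⊆ e ∪ verts M → f ⊆ e ∨ f ⊆ verts M) :
    IsAdmissible E (insert e M) k := by
  obtain ⟨⟨hME, hMdisj⟩, P, ⟨hPne, hPdisj, hPsup⟩, hcover, hcard⟩ := hM
  have hdisj_of_mem {f : Finset V} (hf : f ∈ M) : Disjoint e f :=
    hdisj.mono_right (subset_verts hf)
  have he_notMem : e ∉ M := notMem_of_disjoint_verts he_ne hdisj
  have hsingle_notMem : {e} ∉ P := fun h =>
    he_notMem (hPsup ▸ subset_verts h (Finset.mem_singleton_self e))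
  have hdisj_parts {p : Finset (Finset V)} (hp : p ∈ P) : Disjoint {e} p := by
    rw [Finset.disjoint_singleton_left]
    exact fun h => he_notMem (hPsup ▸ subset_verts hp h)
  refine ⟨⟨Finset.insert_subset he hME, ?_⟩, insert {e} P, ⟨?_, ?_, ?_⟩, ?_, ?_⟩
  · simp only [Finset.mem_insert]
    rintro f (rfl | hf) g (rfl | hg) hfg
    exacts [absurd rfl hfg, hdisj_of_mem hg, (hdisj_of_mem hf).symm, hMdisj f hf g hg hfg]
  · simp only [Finset.mem_insert]
    rintro p (rfl | hp)
    exacts [Finset.singleton_ne_empty e, hPne p hp]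
  · simp only [Finset.mem_insert]
    rintro p (rfl | hp) q (rfl | hq) hpq
    exacts [absurd rfl hpq, hdisj_parts hq, (hdisj_parts hp).symm, hPdisj p hp q hq hpq]
  · rw [Finset.sup_insert, hPsup, id, Finset.insert_eq, Finset.sup_eq_union]
  · intro f hf
    obtain ⟨hfE, hfM⟩ := Finset.mem_filter.mp hf
    rw [verts_insert] at hfM
    rcases hsplit f hfE hfM with hfe | hfM
    · exact ⟨{e}, Finset.mem_insert_self _ _, by simpa [verts] using hfe⟩
    · obtain ⟨p, hp, hfp⟩ := hcover f (Finset.mem_filter.mpr ⟨hfE, hfM⟩)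
      exact ⟨p, Finset.mem_insert_of_mem hp, hfp⟩
  · rw [Finset.card_insert_of_notMem he_notMem, Finset.card_insert_of_notMem hsingle_notMem]
    -- truncated subtraction: for `k = 0` and `M = P = ∅` the new bound would read `1 ≤ 0`
    omega

end Hypergraph

lemma empty_notMem_graphEdges [Fintype V] (G : SimpleGraph V) : ∅ ∉ graphEdges G := by
  simp [graphEdges]

lemma pair_mem_graphEdges [Fintype V] {G : SimpleGraph V} {u v : V} (h : G.Adj u v) :
    {u, v} ∈ graphEdges G := by
  simp only [graphEdges, Finset.mem_filter, Finset.mem_univ, true_and, Finset.mem_insert,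
    Finset.mem_singleton]
  refine ⟨Finset.card_pair h.ne, ?_⟩
  rintro a (rfl | rfl) b (rfl | rfl) hab
  exacts [absurd rfl hab, h, h.symm, absurd rfl hab]

lemma map_mem_graphEdges_iff [Fintype V] {W : Type*} [DecidableEq W] [Fintype W]
    (G : SimpleGraph V) (φ : W ↪ V) (e : Finset W) :
    e.map φ ∈ graphEdges G ↔ e ∈ graphEdges (G.comap φ) := by
  simp [graphEdges]

lemma IsBlock.mem_of_adj_of_free {G : SimpleGraph V} {B : Finset V} (hB : IsBlock G B)
    {u a : V} (hu : u ∈ B) (hf : FreeVertex G u) (ha : G.Adj u a) : a ∈ B := by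
  have hclique : G.IsClique (↑(insert a B) : Set V) := by
    rw [Finset.coe_insert, SimpleGraph.isClique_insert]
    refine ⟨hB.1, fun b hb hab => ?_⟩
    by_cases hbu : b = u
    · exact hbu ▸ ha.symm
    · exact hf ha (hB.1 hu hb (Ne.symm hbu)) hab
  rw [hB.2 _ hclique (Finset.subset_insert a B)]
  exact Finset.mem_insert_self a B

lemma subset_or_subset_of_forall_free [Fintype V] {G : SimpleGraph V} {B e X : Finset V}
    (hB : IsBlock G B) (heB : e ⊆ B) (hfree : ∀ u ∈ e, FreeVertex G u) (hX : Disjoint B X) :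
    ∀ f ∈ graphEdges G, f ⊆ e ∪ X → f ⊆ e ∨ f ⊆ X := by
  intro f hf hfeX
  by_contra! h
  obtain ⟨a, haf, hae⟩ := Finset.not_subset.mp h.1
  obtain ⟨b, hbf, hbX⟩ := Finset.not_subset.mp h.2
  have haX : a ∈ X := (Finset.mem_union.mp (hfeX haf)).resolve_left hae
  have hbe : b ∈ e := (Finset.mem_union.mp (hfeX hbf)).resolve_right hbX
  have hadj : G.Adj b a := (Finset.mem_filter.mp hf).2.2 b hbf a haf (fun h => hae (h ▸ hbe))
  exact Finset.disjoint_left.mp hX (hB.mem_of_adj_of_free (heB hbe) (hfree b hbe) hadj) haX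

theorem aim_deleteBlock_general [Fintype V] (G : SimpleGraph V)
    (B : Finset V) (hB : IsBlock G B) (u₁ u₂ : V) (hu₁ : u₁ ∈ B) (hu₂ : u₂ ∈ B)
    (hne : u₁ ≠ u₂) (hf₁ : FreeVertex G u₁) (hf₂ : FreeVertex G u₂)
    (k : ℕ) (hk1 : 1 ≤ k) :
    aimG (SimpleGraph.induce ((↑B : Set V)ᶜ) G) k + 1 ≤ aimG G k := by
  set φ := Function.Embedding.subtype (· ∈ ((↑B : Set V)ᶜ))
  obtain ⟨M, hM, hMcard⟩ :=
    exists_isAdmissible_card_eq_aim (empty_notMem_graphEdges (G.induce (↑B)ᶜ)) k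
  set M' := M.map (Finset.mapEmbedding φ).toEmbedding
  have hM' : IsAdmissible (graphEdges G) M' k := hM.map φ (map_mem_graphEdges_iff G φ)
  have hBM' : Disjoint B (verts M') := by
    rw [verts, sup_id_map_mapEmbedding, Finset.disjoint_left]
    simp only [Finset.mem_map]
    rintro _ haB ⟨x, -, rfl⟩
    exact x.2 haB
  have he : {u₁, u₂} ⊆ B := Finset.insert_subset hu₁ (Finset.singleton_subset_iff.mpr hu₂)
  have he_disj : Disjoint {u₁, u₂} (verts M') := hBM'.mono_left he
  have hM'' := hM'.insert_edge hk1 (pair_mem_graphEdges (hB.1 hu₁ hu₂ hne))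
    (Finset.insert_nonempty _ _) he_disj
    (subset_or_subset_of_forall_free hB he (by simp [hf₁, hf₂]) hBM')
  calc aimG (G.induce (↑B)ᶜ) k + 1 = (insert {u₁, u₂} M').card := by
        rw [Finset.card_insert_of_notMem (notMem_of_disjoint_verts (Finset.insert_nonempty _ _)
          he_disj), Finset.card_map, hMcard, aimG]
    _ ≤ aimG G k := hM''.card_le_aim

/-- For a block graph `G`, a block `B` containing two distinct free vertices, and the
induced subgraph `H = G \ V(B)`, one has `aim(H,k) + 1 ≤ aim(G,k)` for `1 ≤ k ≤ ν(G)`. -/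
theorem aim_deleteBlock [Fintype V] (G : SimpleGraph V) (hG : IsBlockGraph G)
    (B : Finset V) (hB : IsBlock G B) (u₁ u₂ : V) (hu₁ : u₁ ∈ B) (hu₂ : u₂ ∈ B)
    (hne : u₁ ≠ u₂) (hf₁ : FreeVertex G u₁) (hf₂ : FreeVertex G u₂)
    (k : ℕ) (hk1 : 1 ≤ k) (hk2 : k ≤ matchNum (graphEdges G)) :
    aimG (SimpleGraph.induce ((↑B : Set V)ᶜ) G) k + 1 ≤ aimG G k :=
  aim_deleteBlock_general G B hB u₁ u₂ hu₁ hu₂ hne hf₁ hf₂ k hk1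
end
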